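/- arXiv:2511.20195 — 5 statements merged into one kernel-verified Lean document; each statement's English description precedes it below -/
import Mathlib

section
/- Let n, m be coprime positive integers with m ≥ n > 1, and let C be the (n+m) × (n+m) circulant matrix over an algebraically closed field of characteristic 0 with associated polynomial f(x) = x^m + 1. Then rank(C) = n + m - 1 if n + m is even, and rank(C) = n + m if n + m is odd. -/
/-!
Index the circulant by `ZMod r`, `r = n + m`. Since `m` is a unit mod `r`, relabelling `p ↦ p * m`
turns `1 + P^m` into `1 + P` for the cyclic shift `P`. A vector `v` is killed by `1 + P` exactly
when `v (p + 1) = -v p`, so `v` is determined by `v 0` through `v p = (-1)^p v 0`. Going once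
around the cycle gives `v 0 = (-1)^r v 0`: for odd `r` this forces `v = 0`, while for even `r`
the alternating vector spans the kernel, which is then a line.
-/

open Matrix Function Module Submodule

theorem Function.Antiperiodic.eq_neg_one_pow_val_mul {r : ℕ} [NeZero r] {β : Type*} [Ring β]
    {v : ZMod r → β} (hv : Antiperiodic v 1) (x : ZMod r) : v x = (-1) ^ x.val * v 0 := by
  simpa using hv.add_nat_mul_eq (x := 0) x.val

section

variable (R : Type*) [Zero R] [One R] {r : ℕ}

def circulantXPowAddOne (s : ZMod r) : Matrix (ZMod r) (ZMod r) R :=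
  of fun p q => if q = p ∨ q = p + s then 1 else 0

theorem circulantXPowAddOne_submatrix_mulRight (u : (ZMod r)ˣ) :
    (circulantXPowAddOne R (u : ZMod r)).submatrix u.mulRight u.mulRight =
      circulantXPowAddOne R (1 : ZMod r) := by
  ext p q
  simp [circulantXPowAddOne, ← add_one_mul, Units.mul_left_inj]

end

section

variable {k : Type*} [Field k] {r : ℕ}

theorem rank_circulantXPowAddOne_units [NeZero r] (u : (ZMod r)ˣ) :
    (circulantXPowAddOne k (u : ZMod r)).rank = (circulantXPowAddOne k (1 : ZMod r)).rank := by
  rw [← circulantXPowAddOne_submatrix_mulRight k u, rank_submatrix]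

variable [NeZero r] [Fact (1 < r)]

theorem circulantXPowAddOne_one_mulVec (v : ZMod r → k) (p : ZMod r) :
    (circulantXPowAddOne k (1 : ZMod r) *ᵥ v) p = v p + v (p + 1) := by
  have hp : p ≠ p + 1 := by simp
  simp only [mulVec, dotProduct, circulantXPowAddOne, of_apply, ite_mul, one_mul, zero_mul]
  rw [← Finset.sum_filter, ← Finset.sum_pair hp]
  congr 1
  ext q
  simp

theorem mem_ker_circulantXPowAddOne_one {v : ZMod r → k} :
    v ∈ LinearMap.ker (circulantXPowAddOne k (1 : ZMod r)).mulVecLin ↔ Antiperiodic v 1 := by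
  simp only [LinearMap.mem_ker, mulVecLin_apply, funext_iff, circulantXPowAddOne_one_mulVec,
    Pi.zero_apply, Antiperiodic, add_eq_zero_iff_eq_neg']

theorem ker_circulantXPowAddOne_one_of_odd (h2 : (2 : k) ≠ 0) (hr : Odd r) :
    LinearMap.ker (circulantXPowAddOne k (1 : ZMod r)).mulVecLin = ⊥ := by
  refine eq_bot_iff.2 fun v hv => funext fun x => ?_
  obtain ⟨j, hj⟩ := hr
  have hx : v x = -v x := by
    simpa [← hj] using (mem_ker_circulantXPowAddOne_one.1 hv).odd_nsmul_antiperiodic j x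
  rw [eq_neg_iff_add_eq_zero, ← two_mul] at hx
  exact (mul_eq_zero.1 hx).resolve_left h2

theorem ker_circulantXPowAddOne_one_of_even (hr : Even r) :
    LinearMap.ker (circulantXPowAddOne k (1 : ZMod r)).mulVecLin =
      span k {fun x : ZMod r => (-1 : k) ^ x.val} := by
  refine le_antisymm (fun v hv => mem_span_singleton.2 ⟨v 0, funext fun x => ?_⟩) ?_
  · simp [(mem_ker_circulantXPowAddOne_one.1 hv).eq_neg_one_pow_val_mul x, mul_comm]
  · refine span_le.2 <| Set.singleton_subset_iff.2 <|
      mem_ker_circulantXPowAddOne_one.2 fun x => ?_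
    rw [ZMod.val_add, ZMod.val_one, neg_one_pow_eq_pow_mod_two,
      Nat.mod_mod_of_dvd _ hr.two_dvd, ← neg_one_pow_eq_pow_mod_two, pow_succ, mul_neg_one]

theorem rank_circulantXPowAddOne_one (h2 : (2 : k) ≠ 0) :
    (circulantXPowAddOne k (1 : ZMod r)).rank = if Even r then r - 1 else r := by
  have hdim :=
    LinearMap.finrank_range_add_finrank_ker (circulantXPowAddOne k (1 : ZMod r)).mulVecLin
  rw [finrank_fintype_fun_eq_card, ZMod.card, ← rank] at hdim
  split_ifs with hr
  · rw [ker_circulantXPowAddOne_one_of_even hr,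
      finrank_span_singleton (ne_iff.2 ⟨0, by simp⟩)] at hdim
    omega
  · rw [ker_circulantXPowAddOne_one_of_odd h2 (Nat.not_even_iff_odd.1 hr), finrank_bot] at hdim
    omega

theorem rank_circulantXPowAddOne_of_coprime (h2 : (2 : k) ≠ 0) {m : ℕ} (hm : m.Coprime r) :
    (circulantXPowAddOne k (m : ZMod r)).rank = if Even r then r - 1 else r := by
  rw [← ZMod.coe_unitOfCoprime m hm, rank_circulantXPowAddOne_units,
    rank_circulantXPowAddOne_one h2]

end

def finEquivZMod (r : ℕ) [NeZero r] : Fin r ≃ ZMod r where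
  toFun i := (i : ℕ)
  invFun z := ⟨z.val, z.val_lt⟩
  left_inv i := Fin.ext (ZMod.val_cast_of_lt i.isLt)
  right_inv := ZMod.natCast_zmod_val

theorem rank_circulant_xm_add_one_general (k : Type*) [Field k] [CharZero k]
    (n m : ℕ) (h : Nat.Coprime n m) (hn : 1 < n)
    (C : Matrix (Fin (n + m)) (Fin (n + m)) k)
    (hC : ∀ p q : Fin (n + m), C p q =
      if ((q : ℕ) : ZMod (n + m)) = ((p : ℕ) : ZMod (n + m)) ∨
         ((q : ℕ) : ZMod (n + m)) = ((p : ℕ) : ZMod (n + m)) + (m : ZMod (n + m))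
      then 1 else 0) :
    C.rank = if Even (n + m) then n + m - 1 else n + m := by
  have : NeZero (n + m) := ⟨by omega⟩
  have : Fact (1 < n + m) := ⟨by omega⟩
  have hC' : C = (circulantXPowAddOne k (m : ZMod (n + m))).submatrix
      (finEquivZMod _) (finEquivZMod _) := by
    ext p q
    simp [hC, circulantXPowAddOne, finEquivZMod]
  rw [hC', rank_submatrix,
    rank_circulantXPowAddOne_of_coprime two_ne_zero (Nat.coprime_add_self_right.2 h.symm)]

/-- Let `n, m` be coprime positive integers with `m ≥ n > 1`, and let `C` be the
`(n+m) × (n+m)` circulant matrix over an algebraically closed field of characteristic 0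
with associated polynomial `f(x) = x^m + 1`.  Then `rank C = n + m - 1` if `n + m` is
even and `rank C = n + m` if `n + m` is odd. -/
theorem rank_circulant_xm_add_one (k : Type*) [Field k] [IsAlgClosed k] [CharZero k]
    (n m : ℕ) (h : Nat.Coprime n m) (hn : 1 < n) (hnm : n ≤ m)
    (C : Matrix (Fin (n + m)) (Fin (n + m)) k)
    (hC : ∀ p q : Fin (n + m), C p q =
      if ((q : ℕ) : ZMod (n + m)) = ((p : ℕ) : ZMod (n + m)) ∨
         ((q : ℕ) : ZMod (n + m)) = ((p : ℕ) : ZMod (n + m)) + (m : ZMod (n + m))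
      then 1 else 0) :
    C.rank = if Even (n + m) then n + m - 1 else n + m :=
  rank_circulant_xm_add_one_general k n m h hn C hC
end

section
/- Let λ be the sequence with λ_0 = 0, λ_1 = 1, λ_{r+2} = α λ_{r+1} + β λ_r, where β ≠ 0, α² + 4β ≠ 0, and λ_{m+1} = 0. Then Σ_{r=1}^{m} λ_{m+2-r}(λ_{r+1} + β λ_{r-1}) = (m-1) β λ_m, and Σ_{r=1}^{m} λ_{m+1-r}(λ_{r+1} + β λ_{r-1}) = 0. -/
open Finset

/-- Let `λ` be the sequence with `λ₀ = 0`, `λ₁ = 1`, `λ_{r+2} = α λ_{r+1} + β λ_r`,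
where `β ≠ 0`, `α² + 4β ≠ 0` and `λ_{m+1} = 0`.  Then
`Σ_{r=1}^{m} λ_{m+2-r} (λ_{r+1} + β λ_{r-1}) = (m - 1) β λ_m` and
`Σ_{r=1}^{m} λ_{m+1-r} (λ_{r+1} + β λ_{r-1}) = 0`. -/
theorem lambda_sum_identities (k : Type*) [Field k] [IsAlgClosed k] [CharZero k]
    (α β : k) (hβ : β ≠ 0) (hD : α ^ 2 + 4 * β ≠ 0)
    (l : ℕ → k) (h0 : l 0 = 0) (h1 : l 1 = 1)
    (hrec : ∀ r : ℕ, l (r + 2) = α * l (r + 1) + β * l r)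
    (m : ℕ) (hm : 1 ≤ m) (hvan : l (m + 1) = 0) :
    (∑ r ∈ Icc 1 m, l (m + 2 - r) * (l (r + 1) + β * l (r - 1)) =
        ((m : k) - 1) * β * l m) ∧
      ∑ r ∈ Icc 1 m, l (m + 1 - r) * (l (r + 1) + β * l (r - 1)) = 0 := by
  obtain ⟨δ, hδ⟩ := IsAlgClosed.exists_pow_nat_eq (α ^ 2 + 4 * β) (n := 2) (by norm_num)
  have h2 : (2 : k) ≠ 0 := two_ne_zero
  set u : k := (α + δ) / 2 with hu
  set v : k := (α - δ) / 2 with hv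
  have huv : u * v = -β := by
    rw [hu, hv]; field_simp; linear_combination -hδ
  have hsum : u + v = α := by rw [hu, hv]; field_simp; ring
  have hd : u - v = δ := by rw [hu, hv]; field_simp; ring
  have hd0 : u - v ≠ 0 := by
    intro h
    apply hD
    rw [← hδ, ← hd, h]; ring
  clear_value u v
  -- Binet formula
  have hl : ∀ r, l r * (u - v) = u ^ r - v ^ r := by
    have key : ∀ r, l r * (u - v) = u ^ r - v ^ r ∧
        l (r + 1) * (u - v) = u ^ (r + 1) - v ^ (r + 1) := by
      intro r
      induction r with
      | zero => constructor <;> simp [h0, h1]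
      | succ n ih =>
        refine ⟨ih.2, ?_⟩
        rw [show n + 1 + 1 = n + 2 from rfl, hrec]
        linear_combination α * ih.2 + β * ih.1
          - (u ^ (n + 1) - v ^ (n + 1)) * hsum + (u ^ n - v ^ n) * huv
    exact fun r => (key r).1
  -- the "Lucas" values
  have hs : ∀ i : ℕ, l (i + 2) + β * l i = u ^ (i + 1) + v ^ (i + 1) := by
    intro i
    apply mul_right_cancel₀ hd0
    have e1 := hl (i + 2)
    have e2 := hl i
    linear_combination e1 + β * e2 + (u ^ i - v ^ i) * huv
  have hw : u ^ (m + 1) = v ^ (m + 1) := by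
    have := hl (m + 1)
    rw [hvan, zero_mul] at this
    linear_combination -this
  -- geometric sums
  have hG1 : (∑ i ∈ range m, u ^ (m - 1 - i) * v ^ i) * (u - v) = u ^ m - v ^ m := by
    have hswap : (∑ i ∈ range m, u ^ (m - 1 - i) * v ^ i)
        = ∑ i ∈ range m, v ^ i * u ^ (m - 1 - i) :=
      Finset.sum_congr rfl fun i _ => mul_comm _ _
    rw [hswap]
    linear_combination -(geom_sum₂_mul v u m)
  have hG2 : (∑ i ∈ range m, u ^ i * v ^ (m - 1 - i)) * (u - v) = u ^ m - v ^ m :=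
    geom_sum₂_mul u v m
  constructor
  · -- first identity
    rw [← Finset.Ico_add_one_right_eq_Icc, Finset.sum_Ico_eq_sum_range]
    simp only [Nat.add_sub_cancel]
    apply mul_right_cancel₀ (mul_ne_zero hd0 hd0)
    have step : ∀ i ∈ range m,
        l (m + 2 - (1 + i)) * (l (1 + i + 1) + β * l (1 + i - 1)) * ((u - v) * (u - v))
          = (u ^ (m + 2) - v ^ (m + 2)) * (u - v)
            + u ^ 2 * v * (u ^ (m - 1 - i) * v ^ i * (u - v))
            - u * v ^ 2 * (u ^ i * v ^ (m - 1 - i) * (u - v)) := by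
      intro i hi
      rw [Finset.mem_range] at hi
      obtain ⟨j, hj⟩ := Nat.exists_eq_add_of_lt hi
      subst hj
      have e1 : i + j + 1 + 2 - (1 + i) = j + 2 := by omega
      have e2 : 1 + i + 1 = i + 2 := by omega
      have e3 : 1 + i - 1 = i := by omega
      have e4 : i + j + 1 - 1 - i = j := by omega
      rw [e1, e2, e3, e4, hs i]
      have h5 := hl (j + 2)
      linear_combination (u ^ (i + 1) + v ^ (i + 1)) * (u - v) * h5
    rw [Finset.sum_mul, Finset.sum_congr rfl step]
    simp only [Finset.sum_add_distrib, Finset.sum_sub_distrib, ← Finset.mul_sum,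
      ← Finset.sum_mul, Finset.sum_const, Finset.card_range, nsmul_eq_mul]
    rw [hG1, hG2]
    have e5 := hl m
    have e7 : u ^ m * u = v ^ (m + 1) := by rw [← hw]; ring
    linear_combination -(((m : k) - 1) * l m * ((u - v) * (u - v))) * huv
      + (((m : k) - 1) * (u * v) * (u - v)) * e5 + ((m : k) * (u - v) * (u + v)) * e7
  · -- second identity
    rw [← Finset.Ico_add_one_right_eq_Icc, Finset.sum_Ico_eq_sum_range]
    simp only [Nat.add_sub_cancel]
    apply mul_right_cancel₀ (mul_ne_zero hd0 hd0)
    have step : ∀ i ∈ range m,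
        l (m + 1 - (1 + i)) * (l (1 + i + 1) + β * l (1 + i - 1)) * ((u - v) * (u - v))
          = (u ^ (m + 1) - v ^ (m + 1)) * (u - v)
            + u * v * (u ^ (m - 1 - i) * v ^ i * (u - v))
            - u * v * (u ^ i * v ^ (m - 1 - i) * (u - v)) := by
      intro i hi
      rw [Finset.mem_range] at hi
      obtain ⟨j, hj⟩ := Nat.exists_eq_add_of_lt hi
      subst hj
      have e1 : i + j + 1 + 1 - (1 + i) = j + 1 := by omega
      have e2 : 1 + i + 1 = i + 2 := by omega
      have e3 : 1 + i - 1 = i := by omega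
      have e4 : i + j + 1 - 1 - i = j := by omega
      rw [e1, e2, e3, e4, hs i]
      have h5 := hl (j + 1)
      linear_combination (u ^ (i + 1) + v ^ (i + 1)) * (u - v) * h5
    rw [Finset.sum_mul, Finset.sum_congr rfl step]
    simp only [Finset.sum_add_distrib, Finset.sum_sub_distrib, ← Finset.mul_sum,
      ← Finset.sum_mul, Finset.sum_const, Finset.card_range, nsmul_eq_mul]
    rw [hG1, hG2, hw]
    ring
end

section
/- In the down-up algebra A(α, β) = k⟨x, y⟩/(x²y - βyx² - αxyx, xy² - βy²x - αyxy) with β ≠ 0, the identity x^i y = β λ_{i-1} y x^i + λ_i x y x^{i-1} holds for all i ≥ 1, where λ is the sequence with λ_0 = 0, λ_1 = 1, λ_{r+2} = α λ_{r+1} + β λ_r. -/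
/-- The two defining relations of the graded down-up algebra
`A(α, β) = k⟨x, y⟩ / (x²y - βyx² - αxyx, xy² - βy²x - αyxy)`,
with `x = ι 0` and `y = ι 1` in the free algebra on two generators. -/
inductive DownUpRel (k : Type*) [Field k] (α β : k) :
    FreeAlgebra k (Fin 2) → FreeAlgebra k (Fin 2) → Prop
  | rel1 : DownUpRel k α β
      ((FreeAlgebra.ι k (0 : Fin 2)) ^ 2 * FreeAlgebra.ι k (1 : Fin 2))
      (β • (FreeAlgebra.ι k (1 : Fin 2) * (FreeAlgebra.ι k (0 : Fin 2)) ^ 2) +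
        α • (FreeAlgebra.ι k (0 : Fin 2) * FreeAlgebra.ι k (1 : Fin 2) *
          FreeAlgebra.ι k (0 : Fin 2)))
  | rel2 : DownUpRel k α β
      (FreeAlgebra.ι k (0 : Fin 2) * (FreeAlgebra.ι k (1 : Fin 2)) ^ 2)
      (β • ((FreeAlgebra.ι k (1 : Fin 2)) ^ 2 * FreeAlgebra.ι k (0 : Fin 2)) +
        α • (FreeAlgebra.ι k (1 : Fin 2) * FreeAlgebra.ι k (0 : Fin 2) *
          FreeAlgebra.ι k (1 : Fin 2)))

/-- The down-up algebra `A(α, β)`. -/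
def DownUpAlgebra (k : Type*) [Field k] (α β : k) :=
  RingQuot (DownUpRel k α β)

noncomputable instance (k : Type*) [Field k] (α β : k) : Ring (DownUpAlgebra k α β) :=
  inferInstanceAs (Ring (RingQuot (DownUpRel k α β)))

noncomputable instance (k : Type*) [Field k] (α β : k) :
    Algebra k (DownUpAlgebra k α β) :=
  inferInstanceAs (Algebra k (RingQuot (DownUpRel k α β)))

/-- The image of the generator `x` in the down-up algebra. -/
noncomputable def DownUpAlgebra.x (k : Type*) [Field k] (α β : k) : DownUpAlgebra k α β :=
  RingQuot.mkAlgHom k (DownUpRel k α β) (FreeAlgebra.ι k (0 : Fin 2))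

/-- The image of the generator `y` in the down-up algebra. -/
noncomputable def DownUpAlgebra.y (k : Type*) [Field k] (α β : k) : DownUpAlgebra k α β :=
  RingQuot.mkAlgHom k (DownUpRel k α β) (FreeAlgebra.ι k (1 : Fin 2))

/-!
Multiplying `x^{i} y = β λ_{i-1} y x^{i} + λ_{i} x y x^{i-1}` on the left by `x` and rewriting
`x² y` by the first defining relation gives the same shape with coefficients `β λ_i` and
`α λ_i + β λ_{i-1} = λ_{i+1}`, so the identity propagates by induction from `x y = x y`.
-/

theorem pow_succ_mul_eq_of_sq_mul_eq {R A : Type*} [CommSemiring R] [Semiring A] [Algebra R A]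
    {α β : R} {X Y : A}
    (hXY : X ^ 2 * Y = β • (Y * X ^ 2) + α • (X * Y * X))
    {l : ℕ → R} (h0 : l 0 = 0) (h1 : l 1 = 1)
    (hrec : ∀ r : ℕ, l (r + 2) = α * l (r + 1) + β * l r) (n : ℕ) :
    X ^ (n + 1) * Y = (β * l n) • (Y * X ^ (n + 1)) + l (n + 1) • (X * Y * X ^ n) := by
  induction n with
  | zero => simp [h0, h1]
  | succ n ih =>
    calc X ^ (n + 2) * Y = X * (X ^ (n + 1) * Y) := by rw [pow_succ', mul_assoc]
      _ = (β * l n) • (X * Y * X ^ (n + 1)) + l (n + 1) • (X ^ 2 * Y * X ^ n) := by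
        rw [ih, mul_add, mul_smul_comm, mul_smul_comm]
        simp only [mul_assoc, pow_two]
      _ = (β * l (n + 1)) • (Y * X ^ (n + 2)) + l (n + 2) • (X * Y * X ^ (n + 1)) := by
        rw [hXY, add_mul, smul_mul_assoc, smul_mul_assoc, hrec n]
        simp only [mul_assoc, ← pow_add, ← pow_succ']
        rw [show 2 + n = n + 2 by omega]
        module

theorem DownUpAlgebra.x_sq_mul_y (k : Type*) [Field k] (α β : k) :
    DownUpAlgebra.x k α β ^ 2 * DownUpAlgebra.y k α β =
      β • (DownUpAlgebra.y k α β * DownUpAlgebra.x k α β ^ 2) +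
        α • (DownUpAlgebra.x k α β * DownUpAlgebra.y k α β * DownUpAlgebra.x k α β) := by
  have h := RingQuot.mkAlgHom_rel k (DownUpRel.rel1 (k := k) (α := α) (β := β))
  simp only [map_mul, map_pow, map_add, map_smul] at h
  exact h

theorem downUp_xi_y_general (k : Type*) [Field k] (α β : k)
    (l : ℕ → k) (h0 : l 0 = 0) (h1 : l 1 = 1)
    (hrec : ∀ r : ℕ, l (r + 2) = α * l (r + 1) + β * l r) :
    ∀ i : ℕ, 1 ≤ i →
      (DownUpAlgebra.x k α β) ^ i * DownUpAlgebra.y k α β =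
        (β * l (i - 1)) • (DownUpAlgebra.y k α β * (DownUpAlgebra.x k α β) ^ i) +
          l i • (DownUpAlgebra.x k α β * DownUpAlgebra.y k α β *
            (DownUpAlgebra.x k α β) ^ (i - 1)) := by
  intro i hi
  obtain ⟨n, rfl⟩ := Nat.exists_eq_add_of_le' hi
  exact pow_succ_mul_eq_of_sq_mul_eq (DownUpAlgebra.x_sq_mul_y k α β) h0 h1 hrec n

/-- In the down-up algebra `A(α, β)` with `β ≠ 0`, the identity
`x^i y = β λ_{i-1} y x^i + λ_i x y x^{i-1}` holds for all `i ≥ 1`, where `λ` is the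
sequence with `λ₀ = 0`, `λ₁ = 1`, `λ_{r+2} = α λ_{r+1} + β λ_r`. -/
theorem downUp_xi_y (k : Type*) [Field k] (α β : k) (hβ : β ≠ 0)
    (l : ℕ → k) (h0 : l 0 = 0) (h1 : l 1 = 1)
    (hrec : ∀ r : ℕ, l (r + 2) = α * l (r + 1) + β * l r) :
    ∀ i : ℕ, 1 ≤ i →
      (DownUpAlgebra.x k α β) ^ i * DownUpAlgebra.y k α β =
        (β * l (i - 1)) • (DownUpAlgebra.y k α β * (DownUpAlgebra.x k α β) ^ i) +
          l i • (DownUpAlgebra.x k α β * DownUpAlgebra.y k α β *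
            (DownUpAlgebra.x k α β) ^ (i - 1)) :=
  downUp_xi_y_general k α β l h0 h1 hrec
end

section
/- Let n, m be coprime positive integers with m ≥ n ≥ 1. Define sequences b and a by b_1 = n, a_r = ⌊(m - b_r)/n⌋, and b_{r+1} = n a_r + b_r - (m - n). Then for all 1 ≤ r ≤ n we have 0 < b_r ≤ n and m - n < n a_r + b_r ≤ m; moreover Σ_{r=1}^{n} a_r = m - n and b_{n+1} = n. -/
open Finset

/-!
Since `a r = ⌊(m - b r)/n⌋`, the quantity `n * a r + b r` lies in `(m - n, m]`, so the recursion
`b (r + 1) = n * a r + b r - (m - n)` keeps every `b (r + 1)` in `(0, n]`. Modulo `n` the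
recursion reads `b (r + 1) ≡ b r - m`, hence `b (n + 1) ≡ b 1 - n * m ≡ 0`, which forces
`b (n + 1) = n`. Finally `n * ∑ a r` telescopes to `b (n + 1) - b 1 + n * (m - n) = n * (m - n)`.
-/

namespace DownUp

variable {n m : ℤ} {a b : ℕ → ℤ}

theorem sub_lt_mul_add_and_mul_add_le (hn : 0 < n)
    (ha : ∀ r, a r = Int.fdiv (m - b r) n) (r : ℕ) :
    m - n < n * a r + b r ∧ n * a r + b r ≤ m := by
  rw [ha r, Int.fdiv_eq_ediv_of_nonneg _ hn.le]
  have hlower := Int.lt_mul_ediv_self_add (x := m - b r) hn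
  have hupper := Int.mul_ediv_self_le (x := m - b r) hn.ne'
  constructor <;> linarith

theorem succ_pos_and_le (hn : 0 < n) (ha : ∀ r, a r = Int.fdiv (m - b r) n)
    (hb : ∀ r, b (r + 1) = n * a r + b r - (m - n)) (r : ℕ) :
    0 < b (r + 1) ∧ b (r + 1) ≤ n := by
  have := sub_lt_mul_add_and_mul_add_le hn ha r
  rw [hb r]
  constructor <;> linarith

theorem add_modEq (hb : ∀ r, b (r + 1) = n * a r + b r - (m - n)) (s k : ℕ) :
    b (s + k) ≡ b s - k * m [ZMOD n] := by
  induction k with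
  | zero => simp
  | succ k ih =>
    have hstep : b (s + k + 1) ≡ b (s + k) - m [ZMOD n] :=
      Int.modEq_iff_dvd.mpr ⟨-(a (s + k) + 1), by rw [hb]; ring⟩
    calc b (s + (k + 1)) = b (s + k + 1) := rfl
      _ ≡ b (s + k) - m [ZMOD n] := hstep
      _ ≡ b s - k * m - m [ZMOD n] := ih.sub_right m
      _ = b s - ↑(k + 1) * m := by push_cast; ring

theorem mul_sum_Icc (hb : ∀ r, b (r + 1) = n * a r + b r - (m - n)) (N : ℕ) :
    n * ∑ r ∈ Icc 1 N, a r = b (N + 1) - b 1 + N * (m - n) := by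
  induction N with
  | zero => simp
  | succ N ih =>
    rw [sum_Icc_succ_top (by omega), mul_add, ih, hb (N + 1)]
    push_cast
    ring

end DownUp

theorem downup_floor_sequences_general (n m : ℕ)
    (hn : 1 ≤ n)
    (a b : ℕ → ℤ) (hb1 : b 1 = n)
    (ha : ∀ r : ℕ, a r = Int.fdiv ((m : ℤ) - b r) (n : ℤ))
    (hb : ∀ r : ℕ, b (r + 1) = (n : ℤ) * a r + b r - ((m : ℤ) - n)) :
    (∀ r : ℕ, 1 ≤ r → r ≤ n →
        0 < b r ∧ b r ≤ (n : ℤ) ∧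
        (m : ℤ) - n < (n : ℤ) * a r + b r ∧ (n : ℤ) * a r + b r ≤ (m : ℤ)) ∧
      (∑ r ∈ Icc 1 n, a r = (m : ℤ) - n) ∧ b (n + 1) = n := by
  have hn' : (0 : ℤ) < n := by exact_mod_cast hn
  have hlast : b (n + 1) = n := by
    have hdvd : (n : ℤ) ∣ b (1 + n) := by
      have := DownUp.add_modEq hb 1 n
      rw [hb1] at this
      exact Int.modEq_zero_iff_dvd.mp (this.trans (Int.modEq_zero_iff_dvd.mpr ⟨1 - m, by ring⟩))
    rw [add_comm] at hdvd
    have := DownUp.succ_pos_and_le hn' ha hb n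
    exact le_antisymm this.2 (Int.le_of_dvd this.1 hdvd)
  refine ⟨fun r hr _ => ?_, ?_, hlast⟩
  · obtain ⟨s, rfl⟩ : ∃ s, r = s + 1 := ⟨r - 1, by omega⟩
    obtain ⟨hpos, hle⟩ := DownUp.succ_pos_and_le hn' ha hb s
    exact ⟨hpos, hle, DownUp.sub_lt_mul_add_and_mul_add_le hn' ha _⟩
  · have hsum := DownUp.mul_sum_Icc hb n
    rw [hlast, hb1, sub_self, zero_add] at hsum
    exact mul_left_cancel₀ hn'.ne' hsum

/-- Let `n, m` be coprime positive integers with `m ≥ n ≥ 1`.  Define sequences `b`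
and `a` by `b 1 = n`, `a r = ⌊(m - b r)/n⌋` (floor division) and
`b (r+1) = n * a r + b r - (m - n)`.  Then for all `1 ≤ r ≤ n` we have `0 < b r ≤ n`
and `m - n < n * a r + b r ≤ m`; moreover `Σ_{r=1}^{n} a r = m - n` and
`b (n+1) = n`. -/
theorem downup_floor_sequences (n m : ℕ) (hc : Nat.Coprime n m)
    (hn : 1 ≤ n) (hnm : n ≤ m)
    (a b : ℕ → ℤ) (hb1 : b 1 = n)
    (ha : ∀ r : ℕ, a r = Int.fdiv ((m : ℤ) - b r) (n : ℤ))
    (hb : ∀ r : ℕ, b (r + 1) = (n : ℤ) * a r + b r - ((m : ℤ) - n)) :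
    (∀ r : ℕ, 1 ≤ r → r ≤ n →
        0 < b r ∧ b r ≤ (n : ℤ) ∧
        (m : ℤ) - n < (n : ℤ) * a r + b r ∧ (n : ℤ) * a r + b r ≤ (m : ℤ)) ∧
      (∑ r ∈ Icc 1 n, a r = (m : ℤ) - n) ∧ b (n + 1) = n :=
  downup_floor_sequences_general n m hn a b hb1 ha hb
end

section
/- Let n, m be coprime positive integers, k a field of characteristic 0. For a function μ : {1, ..., 2(n+m)} → k, suppose μ(p+n) = μ(p) - 1 whenever 1 ≤ p ≤ n + 2m and μ(q+m) = μ(q) whenever 1 ≤ q ≤ 2n + m. Then Σ_{r=1}^{n}(μ(n + 2m + r) - μ(r)) = -n, but also (by splitting the sum according to division of 2(n+m) by n) this sum equals -(n + 2m); hence no such μ exists. -/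
open Finset

/-!
Comparing `μ` at distance `n + 2m` on `[1, n]` with `μ` at distance `n` on `[1, n + 2m]` gives
two sums of differences that telescope to the same thing. One `n`-shift followed by two `m`-shifts
shows that each of the `n` terms of the first sum is `-1`, while each of the `n + 2m` terms of the
second is `-1` directly, so `n = n + 2m`, impossible in characteristic `0` since `m > 0`.
-/

/-- Both sides equal `∑_{(0, a+b]} f - ∑_{(0, a]} f - ∑_{(0, b]} f`. -/
theorem sum_Icc_one_shift_sub_comm {M : Type*} [AddCommGroup M] (f : ℕ → M) (a b : ℕ) :
    ∑ r ∈ Icc 1 a, (f (b + r) - f r) = ∑ r ∈ Icc 1 b, (f (a + r) - f r) := by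
  have Icc_one (c : ℕ) : Icc 1 c = Ioc 0 c := Icc_succ_left_eq_Ioc 0 c
  have shift (c d : ℕ) : ∑ r ∈ Ioc 0 c, f (d + r) = ∑ r ∈ Ioc d (d + c), f r := by
    simpa using (sum_map (Ioc 0 c) (addLeftEmbedding d) f).symm
  have split (c d : ℕ) := sum_Ioc_consecutive f (Nat.zero_le c) (Nat.le_add_right c d)
  simp only [Icc_one, sum_sub_distrib, shift, sub_eq_sub_iff_add_eq_add]
  rw [add_comm, split, add_comm _ (∑ r ∈ Ioc 0 a, f r), split, add_comm]

theorem no_mu_nat_general (k : Type*) [Field k] [CharZero k]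
    (n m : ℕ) (hm : 0 < m)
    (μ : ℕ → k)
    (hx : ∀ p : ℕ, 1 ≤ p → p ≤ n + 2 * m → μ (p + n) = μ p - 1)
    (hy : ∀ q : ℕ, 1 ≤ q → q ≤ 2 * n + m → μ (q + m) = μ q) :
    (∑ r ∈ Icc 1 n, (μ (n + 2 * m + r) - μ r) = -(n : k)) ∧
      (∑ r ∈ Icc 1 n, (μ (n + 2 * m + r) - μ r) = -((n : k) + 2 * m)) ∧ False := by
  have long_shift : ∀ r ∈ Icc 1 n, μ (n + 2 * m + r) - μ r = -1 := by
    intro r hr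
    rw [mem_Icc] at hr
    rw [show n + 2 * m + r = r + n + m + m by ring, hy _ (by omega) (by omega),
      hy _ (by omega) (by omega), hx r hr.1 (by omega), sub_sub_cancel_left]
  have short_shift : ∀ p ∈ Icc 1 (n + 2 * m), μ (n + p) - μ p = -1 := by
    intro p hp
    rw [mem_Icc] at hp
    rw [add_comm, hx p hp.1 hp.2, sub_sub_cancel_left]
  have h_direct : ∑ r ∈ Icc 1 n, (μ (n + 2 * m + r) - μ r) = -(n : k) := by
    simp [sum_congr rfl long_shift]
  have h_telescoped : ∑ r ∈ Icc 1 n, (μ (n + 2 * m + r) - μ r) = -((n : k) + 2 * m) := by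
    rw [sum_Icc_one_shift_sub_comm, sum_congr rfl short_shift]
    simp
  have h_two_m : ((2 * m : ℕ) : k) = 0 := by
    push_cast
    linear_combination h_telescoped - h_direct
  exact ⟨h_direct, h_telescoped, by have := Nat.cast_eq_zero.mp h_two_m; omega⟩

/-- Let `n, m` be coprime positive integers, `k` a field of characteristic 0.
For `μ : ℕ → k` with `μ(p + n) = μ(p) - 1` whenever `1 ≤ p ≤ n + 2m` and
`μ(q + m) = μ(q)` whenever `1 ≤ q ≤ 2n + m`, one has
`Σ_{r=1}^{n} (μ(n + 2m + r) - μ(r)) = -n` and also this sum equals `-(n + 2m)`;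
hence no such `μ` exists. -/
theorem no_mu_nat (k : Type*) [Field k] [CharZero k]
    (n m : ℕ) (hn : 0 < n) (hm : 0 < m) (hc : Nat.Coprime n m)
    (μ : ℕ → k)
    (hx : ∀ p : ℕ, 1 ≤ p → p ≤ n + 2 * m → μ (p + n) = μ p - 1)
    (hy : ∀ q : ℕ, 1 ≤ q → q ≤ 2 * n + m → μ (q + m) = μ q) :
    (∑ r ∈ Icc 1 n, (μ (n + 2 * m + r) - μ r) = -(n : k)) ∧
      (∑ r ∈ Icc 1 n, (μ (n + 2 * m + r) - μ r) = -((n : k) + 2 * m)) ∧ False :=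
  no_mu_nat_general k n m hm μ hx hy
end
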